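/- Let ξ ∈ H with ξ ≠ 0 and a = Real.sqrt (1 + ‖ξ‖²). The bounded operator A on H defined by A x = x + ((a−1)/‖ξ‖²)·⟨x,ξ⟩·ξ is a positive operator satisfying A ∘ A = S, where S x = x + ⟨x,ξ⟩·ξ; moreover A ξ = a·ξ and A y = y for every y ∈ H with ⟨y,ξ⟩ = 0. -/

import Mathlib

open scoped InnerProductSpace
open ContinuousLinearMap InnerProductSpace

/-!
Writing `P = |ξ⟩⟨ξ|` for the rank-one operator `x ↦ ⟪ξ, x⟫ • ξ`, we have `A = 1 + c P` and
`S = 1 + P` with `c = (a - 1) / ‖ξ‖² ≥ 0`. Since `P² = ‖ξ‖² P`, `A² = 1 + (2c + c² ‖ξ‖²) P`, and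
`c` is the positive root of `2c + c² ‖ξ‖² = 1`. Positivity holds because `P` is positive.
-/

section RankOnePerturbation

variable {𝕜 E : Type*} [RCLike 𝕜] [NormedAddCommGroup E] [InnerProductSpace 𝕜 E]

theorem one_add_smul_rankOne_self_comp_self (c : 𝕜) (ξ : E) :
    (1 + c • rankOne 𝕜 ξ ξ) ∘L (1 + c • rankOne 𝕜 ξ ξ) =
      1 + (2 * c + c ^ 2 * ⟪ξ, ξ⟫_𝕜) • rankOne 𝕜 ξ ξ := by
  rw [← mul_def, add_mul, mul_add, mul_add]
  simp only [one_mul, mul_one, smul_mul_smul_comm, mul_def, rankOne_comp_rankOne, smul_smul]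
  module

theorem one_add_smul_rankOne_self_apply_self (c : 𝕜) (ξ : E) :
    (1 + c • rankOne 𝕜 ξ ξ) ξ = (1 + c * ⟪ξ, ξ⟫_𝕜) • ξ := by
  simp [add_smul, mul_smul]

theorem isPositive_one_add_smul_rankOne_self {c : ℝ} (hc : 0 ≤ c) (ξ : E) :
    (1 + (c : 𝕜) • rankOne 𝕜 ξ ξ).IsPositive :=
  isPositive_one.add ((isPositive_rankOne_self ξ).smul_of_nonneg (RCLike.ofReal_nonneg.mpr hc))

end RankOnePerturbation

theorem two_mul_add_sq_mul_of_sqrt_one_add {t : ℝ} (ht : 0 < t) :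
    2 * ((√(1 + t) - 1) / t) + ((√(1 + t) - 1) / t) ^ 2 * t = 1 := by
  have hsq : √(1 + t) ^ 2 = 1 + t := Real.sq_sqrt (by positivity)
  field_simp
  linear_combination hsq

theorem stmt2 {H : Type*} [NormedAddCommGroup H] [InnerProductSpace ℂ H]
    (ξ : H) (hξ : ξ ≠ 0) (a : ℝ) (ha : a = Real.sqrt (1 + ‖ξ‖ ^ 2))
    (A : H →L[ℂ] H)
    (hA : ∀ x : H, A x = x + ((((a - 1) / ‖ξ‖ ^ 2 : ℝ) : ℂ) * ⟪ξ, x⟫_ℂ) • ξ)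
    (S : H →L[ℂ] H) (hS : ∀ x : H, S x = x + ⟪ξ, x⟫_ℂ • ξ) :
    A.IsPositive ∧ A ∘L A = S ∧ A ξ = (a : ℂ) • ξ ∧
      ∀ y : H, ⟪ξ, y⟫_ℂ = 0 → A y = y := by
  set c : ℝ := (a - 1) / ‖ξ‖ ^ 2 with hc
  have hnorm : 0 < ‖ξ‖ ^ 2 := pow_pos (norm_pos_iff.mpr hξ) 2
  have hinner : ⟪ξ, ξ⟫_ℂ = ((‖ξ‖ ^ 2 : ℝ) : ℂ) := by simp [inner_self_eq_norm_sq_to_K]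
  have hA' : A = 1 + (c : ℂ) • rankOne ℂ ξ ξ := by ext x; simp [hA, mul_smul]
  have hS' : S = 1 + rankOne ℂ ξ ξ := by ext x; simp [hS]
  have hc_nonneg : 0 ≤ c := div_nonneg (by simp [ha, Real.one_le_sqrt]) hnorm.le
  refine ⟨hA' ▸ isPositive_one_add_smul_rankOne_self hc_nonneg ξ, ?_, ?_, ?_⟩
  · have hc_sq : 2 * c + c ^ 2 * ‖ξ‖ ^ 2 = 1 := by
      rw [hc, ha]; exact two_mul_add_sq_mul_of_sqrt_one_add hnorm
    have hc_sq' : 2 * (c : ℂ) + (c : ℂ) ^ 2 * ((‖ξ‖ ^ 2 : ℝ) : ℂ) = 1 := by exact_mod_cast hc_sq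
    rw [hA', hS', one_add_smul_rankOne_self_comp_self, hinner, hc_sq', one_smul]
  · rw [hA', one_add_smul_rankOne_self_apply_self, hinner, ← Complex.ofReal_mul, hc,
      div_mul_cancel₀ _ hnorm.ne']
    simp
  · intro y hy
    simp [hA, hy]
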